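/- arXiv:2406.01093 — 3 statements merged into one kernel-verified Lean document; each statement's English description precedes it below -/
import Mathlib

section
/- Let A be a bialgebra over a commutative ring R and let k ≥ 1. Then Δ̄(P^k) is contained in Σ_{i=1}^{k−1} P^i ⊗ P^{k−i}; that is, for every x ∈ P^k, the element Δ̄(x) belongs to the R-submodule of A ⊗[R] A spanned by the elements a ⊗ b with a ∈ P^i and b ∈ P^{k−i} for some 1 ≤ i ≤ k−1. (In particular Δ̄ vanishes on P^1, the span of the primitive elements.) -/
open scoped TensorProduct

/-- The reduced comultiplication `Δ̄(x) = Δ(x) - x ⊗ 1 - 1 ⊗ x` of a bialgebra. -/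
noncomputable def reducedComul (R : Type*) {A : Type*} [CommRing R] [Ring A] [Bialgebra R A]
    (x : A) : A ⊗[R] A :=
  Coalgebra.comul x - x ⊗ₜ[R] (1 : A) - (1 : A) ⊗ₜ[R] x

/-- An element of a bialgebra is primitive if `Δ(x) = x ⊗ 1 + 1 ⊗ x`. -/
def IsPrimitiveElem (R : Type*) {A : Type*} [CommRing R] [Ring A] [Bialgebra R A]
    (x : A) : Prop :=
  Coalgebra.comul (R := R) x = x ⊗ₜ[R] (1 : A) + (1 : A) ⊗ₜ[R] x

/-- `Pfilt R A k` is the `R`-submodule of `A` spanned by all products `x₁ ⋯ x_j` of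
`1 ≤ j ≤ k` primitive elements: the `k`-th step of the primitive filtration. -/
def Pfilt (R A : Type*) [CommRing R] [Ring A] [Bialgebra R A] (k : ℕ) : Submodule R A :=
  Submodule.span R
    {z : A | ∃ l : List A, l ≠ [] ∧ l.length ≤ k ∧ (∀ x ∈ l, IsPrimitiveElem R x) ∧ z = l.prod}

section Aux

variable {R A : Type*} [CommRing R] [Ring A] [Bialgebra R A]

/-- The generating set of `Σ_{i=1}^{k-1} P^i ⊗ P^{k-i}`. -/
def Tset (R A : Type*) [CommRing R] [Ring A] [Bialgebra R A] (k : ℕ) : Set (A ⊗[R] A) :=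
  {t : A ⊗[R] A | ∃ i : ℕ, 1 ≤ i ∧ i ≤ k - 1 ∧
    ∃ a ∈ Pfilt R A i, ∃ b ∈ Pfilt R A (k - i), t = a ⊗ₜ[R] b}

lemma Pfilt_mono {k k' : ℕ} (h : k ≤ k') : Pfilt R A k ≤ Pfilt R A k' :=
  Submodule.span_mono (fun _z ⟨l, h1, h2, h3, h4⟩ => ⟨l, h1, h2.trans h, h3, h4⟩)

lemma Tset_mono {k k' : ℕ} (h : k ≤ k') : Tset R A k ⊆ Tset R A k' := by
  rintro t ⟨i, h1, h2, a, ha, b, hb, rfl⟩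
  exact ⟨i, h1, h2.trans (Nat.sub_le_sub_right h 1), a, ha,
    b, Pfilt_mono (Nat.sub_le_sub_right h i) hb, rfl⟩

lemma prim_mem_Pfilt {x : A} (hx : IsPrimitiveElem R x) : x ∈ Pfilt R A 1 :=
  Submodule.subset_span ⟨[x], by simp, by simp, by simpa, by simp⟩

lemma mul_prim_mem {x a : A} (hx : IsPrimitiveElem R x) {i : ℕ} (ha : a ∈ Pfilt R A i) :
    x * a ∈ Pfilt R A (i + 1) := by
  induction ha using Submodule.span_induction with
  | mem z hz =>
    obtain ⟨l, h1, h2, h3, rfl⟩ := hz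
    refine Submodule.subset_span ⟨x :: l, by simp, by simpa using h2, ?_, by simp⟩
    intro y hy
    rcases List.mem_cons.1 hy with rfl | hy
    · exact hx
    · exact h3 y hy
  | zero => simpa using Submodule.zero_mem _
  | add u v _ _ hu hv => rw [mul_add]; exact Submodule.add_mem _ hu hv
  | smul r u _ hu => rw [mul_smul_comm]; exact Submodule.smul_mem _ r hu

lemma mulLeft_tmul_one_mem {x : A} (hx : IsPrimitiveElem R x) {k : ℕ}
    {t : A ⊗[R] A} (ht : t ∈ Submodule.span R (Tset R A k)) :
    (x ⊗ₜ[R] (1 : A)) * t ∈ Submodule.span R (Tset R A (k + 1)) := by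
  induction ht using Submodule.span_induction with
  | mem z hz =>
    obtain ⟨i, h1, h2, a, ha, b, hb, rfl⟩ := hz
    rw [Algebra.TensorProduct.tmul_mul_tmul, one_mul]
    refine Submodule.subset_span ⟨i + 1, by omega, by omega, x * a, mul_prim_mem hx ha,
      b, ?_, rfl⟩
    have : k - i = k + 1 - (i + 1) := by omega
    rwa [← this]
  | zero => simpa using Submodule.zero_mem _
  | add u v _ _ hu hv => rw [mul_add]; exact Submodule.add_mem _ hu hv
  | smul r u _ hu => rw [mul_smul_comm]; exact Submodule.smul_mem _ r hu

lemma one_tmul_mulLeft_mem {x : A} (hx : IsPrimitiveElem R x) {k : ℕ}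
    {t : A ⊗[R] A} (ht : t ∈ Submodule.span R (Tset R A k)) :
    ((1 : A) ⊗ₜ[R] x) * t ∈ Submodule.span R (Tset R A (k + 1)) := by
  induction ht using Submodule.span_induction with
  | mem z hz =>
    obtain ⟨i, h1, h2, a, ha, b, hb, rfl⟩ := hz
    rw [Algebra.TensorProduct.tmul_mul_tmul, one_mul]
    refine Submodule.subset_span ⟨i, h1, by omega, a, ha, x * b, ?_, rfl⟩
    have : (k - i) + 1 = k + 1 - i := by omega
    rw [← this]
    exact mul_prim_mem hx hb
  | zero => simpa using Submodule.zero_mem _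
  | add u v _ _ hu hv => rw [mul_add]; exact Submodule.add_mem _ hu hv
  | smul r u _ hu => rw [mul_smul_comm]; exact Submodule.smul_mem _ r hu

lemma key_lemma (l : List A) (hl : l ≠ []) (hp : ∀ y ∈ l, IsPrimitiveElem R y) :
    reducedComul R l.prod ∈ Submodule.span R (Tset R A l.length) := by
  induction l with
  | nil => exact absurd rfl hl
  | cons x l' ih =>
    have hx : IsPrimitiveElem R x := hp x (by simp)
    rcases eq_or_ne l' [] with rfl | hl'
    · have : reducedComul R ([x].prod) = 0 := by
        have h := hx
        unfold IsPrimitiveElem at h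
        simp only [List.prod_cons, List.prod_nil, mul_one, reducedComul, h]
        abel
      rw [this]; exact Submodule.zero_mem _
    · have hp' : ∀ y ∈ l', IsPrimitiveElem R y := fun y hy => hp y (by simp [hy])
      have ih' := ih hl' hp'
      set m := l'.prod with hm
      set D := reducedComul R m with hD
      have hcm : Coalgebra.comul (R := R) m = m ⊗ₜ[R] (1 : A) + (1 : A) ⊗ₜ[R] m + D := by
        rw [hD]; unfold reducedComul; abel
      have hprod : (x :: l').prod = x * m := by simp [hm]
      have hexp : reducedComul R ((x :: l').prod) =
          x ⊗ₜ[R] m + m ⊗ₜ[R] x + (x ⊗ₜ[R] (1 : A)) * D + ((1 : A) ⊗ₜ[R] x) * D := by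
        rw [hprod]
        unfold reducedComul
        rw [Bialgebra.comul_mul, hx, hcm]
        simp only [mul_add, add_mul, Algebra.TensorProduct.tmul_mul_tmul, one_mul, mul_one]
        abel
      rw [hexp]
      have hml : m ∈ Pfilt R A l'.length :=
        Submodule.subset_span ⟨l', hl', le_refl _, hp', rfl⟩
      have hlen : 1 ≤ l'.length := List.length_pos_iff.2 hl'
      have hlen2 : (x :: l').length = l'.length + 1 := by simp
      rw [hlen2]
      refine Submodule.add_mem _ (Submodule.add_mem _ (Submodule.add_mem _ ?_ ?_) ?_) ?_
      · exact Submodule.subset_span ⟨1, le_refl _, by omega, x, prim_mem_Pfilt hx,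
          m, by simpa using hml, rfl⟩
      · exact Submodule.subset_span ⟨l'.length, hlen, by omega, m,
          by simpa using hml, x, by simpa using prim_mem_Pfilt hx, rfl⟩
      · exact mulLeft_tmul_one_mem hx ih'
      · exact one_tmul_mulLeft_mem hx ih'

end Aux

/-- `Δ̄(P^k) ⊆ Σ_{i=1}^{k-1} P^i ⊗ P^{k-i}`. -/
theorem stmt2 {R A : Type*} [CommRing R] [Ring A] [Bialgebra R A] (k : ℕ) (hk : 1 ≤ k)
    (x : A) (hx : x ∈ Pfilt R A k) :
    reducedComul R x ∈ Submodule.span R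
      {t : A ⊗[R] A | ∃ i : ℕ, 1 ≤ i ∧ i ≤ k - 1 ∧
        ∃ a ∈ Pfilt R A i, ∃ b ∈ Pfilt R A (k - i), t = a ⊗ₜ[R] b} := by
  show reducedComul R x ∈ Submodule.span R (Tset R A k)
  induction hx using Submodule.span_induction with
  | mem z hz =>
    obtain ⟨l, h1, h2, h3, rfl⟩ := hz
    exact Submodule.span_mono (Tset_mono h2) (key_lemma l h1 h3)
  | zero =>
    have : reducedComul R (0 : A) = 0 := by simp [reducedComul]
    rw [this]; exact Submodule.zero_mem _
  | add u v _ _ hu hv =>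
    have : reducedComul R (u + v) = reducedComul R u + reducedComul R v := by
      simp [reducedComul, TensorProduct.add_tmul, TensorProduct.tmul_add]; abel
    rw [this]; exact Submodule.add_mem _ hu hv
  | smul r u _ hu =>
    have : reducedComul R (r • u) = r • reducedComul R u := by
      simp [reducedComul, smul_sub, TensorProduct.smul_tmul']
    rw [this]; exact Submodule.smul_mem _ r hu
end

section
/- The first homology of a permutograph is generated by length 4 and length 6 cycles: for the permutograph G on words Fin N → Fin s, every element of ker ∂ that lies in the ℤ-span of the ordered pairs of adjacent vertices is a ℤ-linear combination of edge chains of closed walks in G of length 2 (back-and-forth paths), length 4 (squares), and length 6 (hexagons). -/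
/-- The permutograph on words `Fin N → Fin s`: two words are adjacent iff one is obtained
from the other by exchanging two distinct letters sitting in adjacent positions `i, i+1`. -/
def permutograph (N s : ℕ) : SimpleGraph (Fin N → Fin s) where
  Adj v w := ∃ (i : ℕ) (h : i + 1 < N),
      v ⟨i, Nat.lt_of_succ_lt h⟩ ≠ v ⟨i + 1, h⟩ ∧
      w = v ∘ Equiv.swap ⟨i, Nat.lt_of_succ_lt h⟩ ⟨i + 1, h⟩
  symm := by
    constructor
    rintro v w ⟨i, h, hne, rfl⟩
    refine ⟨i, h, ?_, ?_⟩
    · simpa using hne.symm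
    · funext k
      simp
  loopless := by
    constructor
    rintro v ⟨i, h, hne, hv⟩
    apply hne
    conv_lhs => rw [hv]
    simp

/-- The boundary map from the free `ℤ`-module on the ordered pairs of adjacent vertices
(darts) of a simple graph to the free `ℤ`-module on its vertices, `(v,w) ↦ w - v`. -/
noncomputable def graphBoundary {V : Type*} (G : SimpleGraph V) :
    (G.Dart →₀ ℤ) →ₗ[ℤ] (V →₀ ℤ) :=
  Finsupp.lift (V →₀ ℤ) ℤ G.Dart fun d =>
    Finsupp.single d.toProd.2 1 - Finsupp.single d.toProd.1 1

/-- The edge chain of a walk: the formal sum of its consecutive directed edges. -/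
noncomputable def edgeChain {V : Type*} {G : SimpleGraph V} {u v : V} (w : G.Walk u v) : G.Dart →₀ ℤ :=
  (w.darts.map fun d => Finsupp.single d (1 : ℤ)).sum

/-!
Give every word its number of inversions as a height: adjacent words differ in height by one.
A closed walk whose highest vertex is not its base point has a peak `a → m → n`, where `m` is
obtained from `a` by an ascent swap at `i` and `n` from `m` by a descent swap at `j`. Depending on
`|i - j|` the peak cancels (`i = j`), is bypassed through the other corner of a square
(`|i - j| ≥ 2`), or through the other side of a hexagon given by the braid relation
(`|i - j| = 1`); the bypass lies strictly below `m` and differs from the peak by a closed walk of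
length 2, 4 or 6. Otherwise, rotating the walk to start at its (lower) second vertex keeps its
edge chain. Both moves decrease `∑ (L + 2) ^ height` over the vertices of the walk, where `L`
bounds the length of the bypasses, so every closed walk reduces to the trivial one.

Finally, every 1-cycle is a combination of closed walks: a dart `(u, w)` differs from `P w - P u`,
where `P v` is a fixed walk from a base point of the component of `v`, by closed walks.
-/

open Finset SimpleGraph

namespace SimpleGraph

variable {V : Type*} {G : SimpleGraph V}

@[simp] lemma edgeChain_nil {u : V} : edgeChain (Walk.nil : G.Walk u u) = 0 := rfl

@[simp] lemma edgeChain_cons {u v w : V} (h : G.Adj u v) (p : G.Walk v w) :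
    edgeChain (Walk.cons h p) = Finsupp.single ⟨(u, v), h⟩ 1 + edgeChain p := by
  simp [edgeChain]

@[simp] lemma edgeChain_append {u v w : V} (p : G.Walk u v) (q : G.Walk v w) :
    edgeChain (p.append q) = edgeChain p + edgeChain q := by
  simp [edgeChain, Walk.darts_append]

@[simp] lemma edgeChain_copy {u v u' v' : V} (p : G.Walk u v) (hu : u = u') (hv : v = v') :
    edgeChain (p.copy hu hv) = edgeChain p := by
  subst hu hv; rfl

lemma graphBoundary_single_one (d : G.Dart) :
    graphBoundary G (Finsupp.single d 1) =
      Finsupp.single d.toProd.2 1 - Finsupp.single d.toProd.1 1 := by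
  simp [graphBoundary]

theorem mem_of_graphBoundary_eq_zero {S : Submodule ℤ (G.Dart →₀ ℤ)}
    (hS : ∀ (u : V) (w : G.Walk u u), edgeChain w ∈ S) {c : G.Dart →₀ ℤ}
    (hc : graphBoundary G c = 0) : c ∈ S := by
  let P : ∀ v : V, G.Walk (G.connectedComponentMk v).out v := fun v =>
    (ConnectedComponent.exact (Quot.out_eq _)).some
  let Ψ := Finsupp.linearCombination ℤ fun v => edgeChain (P v)
  have hrev {u v : V} (p : G.Walk u v) : edgeChain p.reverse + edgeChain p ∈ S := by
    simpa [add_comm] using hS u (p.append p.reverse)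
  have hdart (d : G.Dart) : Finsupp.single d 1 - Ψ (graphBoundary G (Finsupp.single d 1)) ∈ S := by
    obtain ⟨⟨u, w⟩, huw⟩ := d
    have hcomp := ConnectedComponent.connectedComponentMk_eq_of_adj huw
    have hloop := hS _ ((P u).append (Walk.cons huw ((P w).reverse.copy rfl (by rw [hcomp]))))
    have := sub_mem hloop (hrev (P w))
    simp only [graphBoundary_single_one, map_sub, Ψ, Finsupp.linearCombination_single, one_smul]
    convert this using 1
    simp only [edgeChain_append, edgeChain_cons, edgeChain_copy]
    abel
  have key : ∀ x, x - Ψ (graphBoundary G x) ∈ S := by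
    intro x
    induction x using Finsupp.induction_linear with
    | zero => simp
    | add x y hx hy => simpa [map_add, add_sub_add_comm] using add_mem hx hy
    | single d n =>
      rw [← Finsupp.smul_single_one, map_smul, map_smul, ← smul_sub]
      exact S.smul_mem n (hdart d)
  simpa [hc] using key c

namespace Walk

def weight (b : ℕ) (h : V → ℕ) {u v : V} (p : G.Walk u v) : ℕ :=
  (p.support.map fun x => b ^ h x).sum

variable {b : ℕ} {h : V → ℕ}

@[simp] lemma weight_nil {u : V} : (nil : G.Walk u u).weight b h = b ^ h u := by
  simp [weight]

@[simp] lemma weight_cons {u v w : V} (huv : G.Adj u v) (p : G.Walk v w) :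
    (cons huv p).weight b h = b ^ h u + p.weight b h := by
  simp [weight]

lemma weight_append {u v w : V} (p : G.Walk u v) (q : G.Walk v w) :
    (p.append q).weight b h + b ^ h v = p.weight b h + q.weight b h := by
  induction p with
  | nil => cases q <;> simp [add_comm]
  | cons _ _ ih => simp [add_assoc, ih]

lemma weight_lt_pow {L H : ℕ} {u v : V} (p : G.Walk u v) (hlen : p.length ≤ L)
    (hlt : ∀ x ∈ p.support, h x < H) : p.weight (L + 2) h < (L + 2) ^ H := by
  have hH : H = (H - 1) + 1 := by have := hlt u p.start_mem_support; omega
  have hle : p.weight (L + 2) h ≤ p.support.length • (L + 2) ^ (H - 1) := by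
    rw [weight, ← List.length_map (f := fun x => (L + 2) ^ h x)]
    refine List.sum_le_card_nsmul _ _ ?_
    simp only [List.mem_map]
    rintro _ ⟨x, hx, rfl⟩
    exact Nat.pow_le_pow_right (by omega) (by have := hlt x hx; omega)
  rw [smul_eq_mul, length_support] at hle
  calc p.weight (L + 2) h ≤ (p.length + 1) * (L + 2) ^ (H - 1) := hle
    _ < (L + 2) * (L + 2) ^ (H - 1) := Nat.mul_lt_mul_of_pos_right (by omega) (by positivity)
    _ = (L + 2) ^ H := by rw [hH, pow_succ, mul_comm, Nat.add_sub_cancel]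

end Walk

def IsPeakReducible (G : SimpleGraph V) (S : Submodule ℤ (G.Dart →₀ ℤ)) (h : V → ℕ) (L : ℕ) :
    Prop :=
  ∀ ⦃a m n : V⦄ (ham : G.Adj a m) (hmn : G.Adj m n), h a < h m → h n < h m →
    ∃ r : G.Walk a n, r.length ≤ L ∧ (∀ x ∈ r.support, h x < h m) ∧
      edgeChain (Walk.cons ham (Walk.cons hmn Walk.nil)) - edgeChain r ∈ S

namespace IsPeakReducible

variable {S : Submodule ℤ (G.Dart →₀ ℤ)} {h : V → ℕ} {L : ℕ}

open Walk

theorem exists_lighter_walk (hpeak : G.IsPeakReducible S h L)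
    (hadj : ∀ ⦃u w⦄, G.Adj u w → h u ≠ h w) {a b : V} (p : G.Walk a b)
    (hx : ∃ x ∈ p.support, max (h a) (h b) < h x) :
    ∃ p' : G.Walk a b, p'.weight (L + 2) h < p.weight (L + 2) h ∧
      edgeChain p - edgeChain p' ∈ S := by
  induction p with
  | nil =>
    obtain ⟨x, hx, hlt⟩ := hx
    simp only [support_nil, List.mem_singleton] at hx
    subst hx
    simp at hlt
  | @cons a m b ham p ih =>
    obtain ⟨x, hx, hlt⟩ := hx
    rw [max_lt_iff] at hlt
    have hxp : x ∈ p.support := by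
      rw [support_cons, List.mem_cons] at hx
      exact hx.resolve_left (by rintro rfl; exact lt_irrefl _ hlt.1)
    rcases (hadj ham).lt_or_gt with hup | hdown
    · cases p with
      | nil =>
        simp only [support_nil, List.mem_singleton] at hxp
        subst hxp
        omega
      | @cons _ n _ hmn q =>
        rcases (hadj hmn).lt_or_gt with hup' | hdown'
        · have hy : ∃ y ∈ (cons hmn q).support, max (h m) (h b) < h y := by
            by_cases hmx : h m < h x
            · exact ⟨x, hxp, max_lt hmx hlt.2⟩
            · exact ⟨n, by simp, max_lt hup' (by omega)⟩
          obtain ⟨p', hw, hS⟩ := ih hy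
          exact ⟨cons ham p', by simpa using hw, by simpa using hS⟩
        · obtain ⟨r, hlen, hr, hrS⟩ := hpeak ham hmn hup hdown'
          refine ⟨r.append q, ?_, ?_⟩
          · have happ := weight_append (b := L + 2) (h := h) r q
            have hr' := weight_lt_pow r hlen hr
            have hq : (L + 2) ^ h n ≤ q.weight (L + 2) h := by
              cases q <;> simp
            simp only [weight_cons]
            omega
          · convert hrS using 1
            simp only [edgeChain_cons, edgeChain_append, edgeChain_nil]
            abel
    · obtain ⟨p', hw, hS⟩ := ih ⟨x, hxp, max_lt (by omega) hlt.2⟩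
      exact ⟨cons ham p', by simpa using hw, by simpa using hS⟩

theorem edgeChain_mem (hpeak : G.IsPeakReducible S h L)
    (hadj : ∀ ⦃u w⦄, G.Adj u w → h u ≠ h w) {b : V} (p : G.Walk b b) : edgeChain p ∈ S := by
  obtain ⟨k, hk⟩ : ∃ k, p.weight (L + 2) h = k := ⟨_, rfl⟩
  induction k using Nat.strong_induction_on generalizing b with
  | _ k ih =>
  cases p with
  | nil => simp
  | @cons _ u _ hbu q =>
    rcases (hadj hbu).lt_or_gt with hup | hdown
    · obtain ⟨p', hw, hS⟩ :=
        hpeak.exists_lighter_walk hadj (cons hbu q) ⟨u, by simp, by simpa using hup⟩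
      simpa using add_mem hS (ih _ (hk ▸ hw) p' rfl)
    · have happ := weight_append (b := L + 2) (h := h) q (cons hbu nil)
      have hpow : (L + 2) ^ h u < (L + 2) ^ h b := Nat.pow_lt_pow_right (by omega) hdown
      simp only [weight_cons, weight_nil] at happ hk
      have := ih _ (by omega) (q.append (cons hbu nil)) rfl
      rwa [edgeChain_append, edgeChain_cons, edgeChain_nil, add_zero, add_comm] at this

end IsPeakReducible

noncomputable def shortCycleSpan (G : SimpleGraph V) : Submodule ℤ (G.Dart →₀ ℤ) :=
  Submodule.span ℤ
    {x | ∃ (u : V) (w : G.Walk u u),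
      (w.length = 2 ∨ w.length = 4 ∨ w.length = 6) ∧ x = edgeChain w}

lemma edgeChain_mem_shortCycleSpan {u : V} (w : G.Walk u u)
    (hw : w.length = 2 ∨ w.length = 4 ∨ w.length = 6) : edgeChain w ∈ G.shortCycleSpan :=
  Submodule.subset_span ⟨u, w, hw, rfl⟩

lemma edgeChain_reverse_add_mem_shortCycleSpan {u v : V} (p : G.Walk u v) :
    edgeChain p.reverse + edgeChain p ∈ G.shortCycleSpan := by
  induction p with
  | nil => simp
  | cons huv p ih =>
    have hback := edgeChain_mem_shortCycleSpan (.cons huv (.cons huv.symm .nil)) (by simp)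
    convert add_mem ih hback using 1
    simp only [Walk.reverse_cons, edgeChain_append, edgeChain_cons, edgeChain_nil]
    abel

lemma edgeChain_sub_mem_shortCycleSpan {u v : V} (p q : G.Walk u v)
    (hl : p.length + q.length = 2 ∨ p.length + q.length = 4 ∨ p.length + q.length = 6) :
    edgeChain p - edgeChain q ∈ G.shortCycleSpan := by
  have hloop := edgeChain_mem_shortCycleSpan (p.append q.reverse) (by simpa using hl)
  convert sub_mem hloop (edgeChain_reverse_add_mem_shortCycleSpan q) using 1
  simp only [edgeChain_append]
  abel

end SimpleGraph

namespace permutograph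

variable {N s : ℕ}

def inversions (v : Fin N → Fin s) : Finset (Fin N × Fin N) :=
  {e | e.1 < e.2 ∧ v e.2 < v e.1}

lemma adj_iff {v w : Fin N → Fin s} :
    (permutograph N s).Adj v w ↔
      ∃ p q : Fin N, (q : ℕ) = p + 1 ∧ v p ≠ v q ∧ w = v ∘ Equiv.swap p q := by
  constructor
  · rintro ⟨i, hi, hne, rfl⟩
    exact ⟨_, _, rfl, hne, rfl⟩
  · rintro ⟨⟨p, hp⟩, ⟨q, hq⟩, hpq, hne, rfl⟩
    simp only at hpq
    subst hpq
    exact ⟨p, hq, hne, rfl⟩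

lemma comp_swap_comp_swap (v : Fin N → Fin s) (p q : Fin N) :
    (v ∘ Equiv.swap p q) ∘ Equiv.swap p q = v := by
  funext x
  simp [Equiv.swap_apply_self]

lemma swap_lt_swap_iff {p q x y : Fin N} (hq : (q : ℕ) = p + 1) (hpq : ¬(x = p ∧ y = q))
    (hqp : ¬(x = q ∧ y = p)) : Equiv.swap p q x < Equiv.swap p q y ↔ x < y := by
  simp only [Equiv.swap_apply_def]
  split_ifs <;> simp only [Fin.lt_def, Fin.ext_iff, not_and] at * <;> omega

lemma inversions_comp_swap {v : Fin N → Fin s} {p q : Fin N} (hq : (q : ℕ) = p + 1)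
    (hlt : v p < v q) :
    inversions (v ∘ Equiv.swap p q) =
      insert (p, q) ((inversions v).map (Equiv.prodCongr (Equiv.swap p q) (Equiv.swap p q))) := by
  have hpq : p < q := Fin.lt_def.2 (by omega)
  ext ⟨x, y⟩
  simp only [inversions, mem_filter, mem_univ, true_and, mem_insert, mem_map_equiv,
    Prod.mk.injEq, Equiv.prodCongr_symm, Equiv.prodCongr_apply, Function.comp_apply,
    Equiv.symm_swap, Prod.map]
  by_cases hxy : x = p ∧ y = q
  · obtain ⟨rfl, rfl⟩ := hxy
    simp [hpq, hlt]
  by_cases hyx : x = q ∧ y = p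
  · obtain ⟨rfl, rfl⟩ := hyx
    simp [hpq.not_gt, hlt.not_gt, hpq.ne']
  rw [swap_lt_swap_iff hq hxy hyx]
  simp [hxy]

lemma card_inversions_comp_swap {v : Fin N → Fin s} {p q : Fin N} (hq : (q : ℕ) = p + 1)
    (hlt : v p < v q) : #(inversions (v ∘ Equiv.swap p q)) = #(inversions v) + 1 := by
  have hpq : p < q := Fin.lt_def.2 (by omega)
  rw [inversions_comp_swap hq hlt, card_insert_of_notMem (by simp [inversions, hpq.not_gt]),
    card_map]

lemma card_inversions_comp_swap_lt_iff {v : Fin N → Fin s} {p q : Fin N}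
    (hq : (q : ℕ) = p + 1) :
    #(inversions (v ∘ Equiv.swap p q)) < #(inversions v) ↔ v q < v p := by
  rcases lt_trichotomy (v p) (v q) with hlt | heq | hgt
  · simp [card_inversions_comp_swap hq hlt, hlt.not_gt]
  · have : v ∘ Equiv.swap p q = v := by
      funext x
      simp only [Function.comp_apply, Equiv.swap_apply_def]
      split_ifs <;> simp_all
    simp [this, heq]
  · have h := card_inversions_comp_swap (v := v ∘ Equiv.swap p q) hq (by simpa using hgt)
    rw [comp_swap_comp_swap] at h
    simp [h, hgt]

lemma lt_card_inversions_comp_swap_iff {v : Fin N → Fin s} {p q : Fin N}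
    (hq : (q : ℕ) = p + 1) :
    #(inversions v) < #(inversions (v ∘ Equiv.swap p q)) ↔ v p < v q := by
  simpa [comp_swap_comp_swap] using
    card_inversions_comp_swap_lt_iff (v := v ∘ Equiv.swap p q) hq

lemma card_inversions_ne_of_adj {v w : Fin N → Fin s} (h : (permutograph N s).Adj v w) :
    #(inversions v) ≠ #(inversions w) := by
  obtain ⟨p, q, hq, hne, rfl⟩ := adj_iff.1 h
  rcases hne.lt_or_gt with hlt | hgt
  · exact ((lt_card_inversions_comp_swap_iff hq).2 hlt).ne
  · exact ((card_inversions_comp_swap_lt_iff hq).2 hgt).ne'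

lemma adj_comp_swap {v : Fin N → Fin s} {p q : Fin N} (hq : (q : ℕ) = p + 1)
    (hne : v p ≠ v q) : (permutograph N s).Adj v (v ∘ Equiv.swap p q) :=
  adj_iff.2 ⟨p, q, hq, hne, rfl⟩

lemma swap_comm_of_ne {p q p' q' : Fin N} (h1 : p ≠ p') (h2 : p ≠ q') (h3 : q ≠ p')
    (h4 : q ≠ q') (v : Fin N → Fin s) :
    (v ∘ Equiv.swap p q) ∘ Equiv.swap p' q' = (v ∘ Equiv.swap p' q') ∘ Equiv.swap p q := by
  funext x
  simp only [Function.comp_apply, Equiv.swap_apply_def]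
  split_ifs <;> simp_all

lemma swap_braid {A B C : Fin N} (hAB : A ≠ B) (hAC : A ≠ C) (hBC : B ≠ C)
    (v : Fin N → Fin s) :
    (v ∘ Equiv.swap A B) ∘ Equiv.swap B C =
      (((v ∘ Equiv.swap B C) ∘ Equiv.swap A B) ∘ Equiv.swap B C) ∘ Equiv.swap A B := by
  funext x
  simp only [Function.comp_apply]
  congr 1
  obtain rfl | rfl | rfl | ⟨hxA, hxB, hxC⟩ : x = A ∨ x = B ∨ x = C ∨ (x ≠ A ∧ x ≠ B ∧ x ≠ C) := by
    tauto
  all_goals simp [Equiv.swap_apply_of_ne_of_ne, hAC.symm, hBC.symm, *]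

lemma exists_square_of_ne {a : Fin N → Fin s} {p q p' q' : Fin N} (hq : (q : ℕ) = p + 1)
    (hq' : (q' : ℕ) = p' + 1) (hfar : (q : ℕ) < p') (hne : a p ≠ a q) (hdesc : a q' < a p') :
    ∃ r : (permutograph N s).Walk a ((a ∘ Equiv.swap p q) ∘ Equiv.swap p' q'), r.length = 2 ∧
      ∀ x ∈ r.support, #(inversions x) ≤
        max #(inversions a) #(inversions ((a ∘ Equiv.swap p q) ∘ Equiv.swap p' q')) := by
  have h1 : p ≠ p' := Fin.ne_of_val_ne (by omega)
  have h2 : p ≠ q' := Fin.ne_of_val_ne (by omega)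
  have h3 : q ≠ p' := Fin.ne_of_val_ne (by omega)
  have h4 : q ≠ q' := Fin.ne_of_val_ne (by omega)
  have e1 := adj_comp_swap hq' hdesc.ne'
  have e2 := adj_comp_swap (v := a ∘ Equiv.swap p' q') hq
    (by simpa [Equiv.swap_apply_of_ne_of_ne, h1, h2, h3, h4] using hne)
  have hlow := (card_inversions_comp_swap_lt_iff (v := a) hq').2 hdesc
  rw [swap_comm_of_ne h1 h2 h3 h4]
  refine ⟨.cons e1 (.cons e2 .nil), rfl, ?_⟩
  simp only [Walk.support_cons, Walk.support_nil, List.mem_cons, List.not_mem_nil, or_false]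
  rintro x (rfl | rfl | rfl) <;> omega

lemma exists_hexagon {a : Fin N → Fin s} {A B C : Fin N} (hB : (B : ℕ) = A + 1)
    (hC : (C : ℕ) = B + 1) (hCA : a C < a A) (hAB : a A < a B) :
    ∃ r : (permutograph N s).Walk a ((a ∘ Equiv.swap A B) ∘ Equiv.swap B C), r.length = 4 ∧
      ∀ x ∈ r.support, #(inversions x) ≤
        max #(inversions a) #(inversions ((a ∘ Equiv.swap A B) ∘ Equiv.swap B C)) := by
  have hAB' : A ≠ B := Fin.ne_of_val_ne (by omega)
  have hAC' : A ≠ C := Fin.ne_of_val_ne (by omega)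
  have hBC' : B ≠ C := Fin.ne_of_val_ne (by omega)
  have hCB := hCA.trans hAB
  have e1 := adj_comp_swap (v := a) hC hCB.ne'
  have e2 := adj_comp_swap (v := a ∘ Equiv.swap B C) hB
    (by simpa [Equiv.swap_apply_of_ne_of_ne, hAB', hAC'] using hCA.ne')
  have e3 := adj_comp_swap (v := (a ∘ Equiv.swap B C) ∘ Equiv.swap A B) hC
    (by simpa [Equiv.swap_apply_of_ne_of_ne, hAB', hAC', hAC'.symm, hBC'.symm] using hAB.ne)
  have e4 := adj_comp_swap (v := ((a ∘ Equiv.swap B C) ∘ Equiv.swap A B) ∘ Equiv.swap B C) hB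
    (by simpa [Equiv.swap_apply_of_ne_of_ne, hAB', hAC', hAC'.symm, hBC'.symm] using hCB.ne)
  have h1 := (card_inversions_comp_swap_lt_iff (v := a) hC).2 hCB
  have h2 := (card_inversions_comp_swap_lt_iff (v := a ∘ Equiv.swap B C) hB).2
    (by simpa [Equiv.swap_apply_of_ne_of_ne, hAB', hAC'] using hCA)
  have h3 := (lt_card_inversions_comp_swap_iff
    (v := ((a ∘ Equiv.swap B C) ∘ Equiv.swap A B) ∘ Equiv.swap B C) hB).2
    (by simpa [Equiv.swap_apply_of_ne_of_ne, hAB', hAC', hAC'.symm, hBC'.symm] using hCB)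
  rw [swap_braid hAB' hAC' hBC']
  refine ⟨.cons e1 (.cons e2 (.cons e3 (.cons e4 .nil))), rfl, ?_⟩
  simp only [Walk.support_cons, Walk.support_nil, List.mem_cons, List.not_mem_nil, or_false]
  rintro x (rfl | rfl | rfl | rfl | rfl) <;> omega

theorem exists_walk_of_peak {a m n : Fin N → Fin s} (ham : (permutograph N s).Adj a m)
    (hmn : (permutograph N s).Adj m n) (hup : #(inversions a) < #(inversions m))
    (hdown : #(inversions n) < #(inversions m)) :
    ∃ r : (permutograph N s).Walk a n, (r.length = 0 ∨ r.length = 2 ∨ r.length = 4) ∧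
      ∀ x ∈ r.support, #(inversions x) ≤ max #(inversions a) #(inversions n) := by
  obtain ⟨p, q, hq, -, hm⟩ := adj_iff.1 ham
  obtain ⟨p', q', hq', -, hn⟩ := adj_iff.1 hmn
  wlog hpp' : (p : ℕ) ≤ p' generalizing a n p q p' q'
  · -- the reversed peak `n → m → a` performs the two swaps in the opposite order
    have hm' : m = n ∘ Equiv.swap p' q' := by rw [hn, comp_swap_comp_swap]
    have ha : a = m ∘ Equiv.swap p q := by rw [hm, comp_swap_comp_swap]
    obtain ⟨r, hlen, hr⟩ := this hmn.symm ham.symm hdown hup p' q' hq' hm' p q hq ha (by omega)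
    exact ⟨r.reverse, by simpa using hlen, by simpa [max_comm] using hr⟩
  have hasc : a p < a q := (lt_card_inversions_comp_swap_iff hq).1 (hm ▸ hup)
  have hdesc : m q' < m p' := (card_inversions_comp_swap_lt_iff hq').1 (hn ▸ hdown)
  subst hm hn
  obtain heq | hnext | hfar : (p' : ℕ) = p ∨ (p' : ℕ) = q ∨ (q : ℕ) < p' := by omega
  · obtain rfl : p' = p := Fin.ext heq
    obtain rfl : q' = q := Fin.ext (by omega)
    refine ⟨Walk.nil.copy rfl (comp_swap_comp_swap a p' q').symm, by simp, ?_⟩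
    simp [comp_swap_comp_swap]
  · obtain rfl : p' = q := Fin.ext hnext
    have hpq' : p ≠ q' := Fin.ne_of_val_ne (by omega)
    have hqq' : p' ≠ q' := Fin.ne_of_val_ne (by omega)
    obtain ⟨r, hlen, hr⟩ := exists_hexagon hq hq'
      (by simpa [Equiv.swap_apply_of_ne_of_ne, hpq'.symm, hqq'.symm] using hdesc) hasc
    exact ⟨r, Or.inr (Or.inr hlen), hr⟩
  · have h1 : p ≠ p' := Fin.ne_of_val_ne (by omega)
    have h2 : p ≠ q' := Fin.ne_of_val_ne (by omega)
    have h3 : q ≠ p' := Fin.ne_of_val_ne (by omega)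
    have h4 : q ≠ q' := Fin.ne_of_val_ne (by omega)
    obtain ⟨r, hlen, hr⟩ := exists_square_of_ne hq hq' hfar hasc.ne
      (by simpa [Equiv.swap_apply_of_ne_of_ne, h1.symm, h2.symm, h3.symm, h4.symm] using hdesc)
    exact ⟨r, Or.inr (Or.inl hlen), hr⟩

theorem isPeakReducible :
    (permutograph N s).IsPeakReducible (permutograph N s).shortCycleSpan
      (fun v => #(inversions v)) 4 := by
  intro a m n ham hmn hup hdown
  obtain ⟨r, hlen, hr⟩ := exists_walk_of_peak ham hmn hup hdown
  refine ⟨r, by omega, fun x hx => (hr x hx).trans_lt (max_lt hup hdown), ?_⟩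
  exact edgeChain_sub_mem_shortCycleSpan _ _
    (by simp only [Walk.length_cons, Walk.length_nil]; omega)

end permutograph

theorem stmt7_general (N s : ℕ)
    (c : (permutograph N s).Dart →₀ ℤ) (hc : graphBoundary (permutograph N s) c = 0) :
    c ∈ Submodule.span ℤ
      {x : (permutograph N s).Dart →₀ ℤ |
        ∃ (u : Fin N → Fin s) (w : (permutograph N s).Walk u u),
          (w.length = 2 ∨ w.length = 4 ∨ w.length = 6) ∧ x = edgeChain w} :=
  mem_of_graphBoundary_eq_zero
    (fun _ w => permutograph.isPeakReducible.edgeChain_mem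
      (fun _ _ h => permutograph.card_inversions_ne_of_adj h) w) hc

/-- The first homology of a permutograph is generated by closed walks of
length `2`, `4` and `6`: every `1`-cycle (element of `ker ∂`) is a `ℤ`-linear combination
of edge chains of closed walks of length `2`, `4` and `6`. -/
theorem stmt7 (N s : ℕ) (hN : 1 ≤ N) (hs : 1 ≤ s)
    (c : (permutograph N s).Dart →₀ ℤ) (hc : graphBoundary (permutograph N s) c = 0) :
    c ∈ Submodule.span ℤ
      {x : (permutograph N s).Dart →₀ ℤ |
        ∃ (u : Fin N → Fin s) (w : (permutograph N s).Walk u u),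
          (w.length = 2 ∨ w.length = 4 ∨ w.length = 6) ∧ x = edgeChain w} :=
  stmt7_general N s c hc
end

section
/- Every closed walk in the base of a finite graph covering has a multiple that lifts to a closed walk: let p : G̃ → G be a covering of simple graphs, let x be a vertex of G whose fiber p⁻¹(x) is finite and nonempty, and let w be a closed walk in G based at x. Then for every x̃ ∈ p⁻¹(x) there exists an integer N ≥ 1 such that the N-fold concatenation of w with itself lifts to a closed walk in G̃ based at x̃ (a walk from x̃ to x̃ whose image under p is the N-fold concatenation of w). -/
/-- A graph homomorphism `p : G' →g G` is a covering if, for every vertex `x` of `G'`, `p`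
restricts to a bijection from the neighbors of `x` onto the neighbors of `p x`. -/
def IsGraphCovering {V W : Type*} {G' : SimpleGraph V} {G : SimpleGraph W}
    (p : G' →g G) : Prop :=
  ∀ x : V, Set.BijOn p (G'.neighborSet x) (G.neighborSet (p x))

/-- The `n`-fold concatenation of a closed walk with itself. -/
def walkPow {V : Type*} {G : SimpleGraph V} {x : V} (w : G.Walk x x) : ℕ → G.Walk x x
  | 0 => SimpleGraph.Walk.nil
  | n + 1 => (walkPow w n).append w

/-!
Lifting a closed walk `w` at `x` from each point of the fibre over `x` defines an endpoint map
(the monodromy of `w`) on that fibre. By unique path lifting, lifting the reversed walk inverts it,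
so it is injective, hence a permutation of the finite fibre, and some iterate `N ≥ 1` of it
fixes `x'`. Concatenating the `N` successive lifts gives a closed lift of `walkPow w N`.
-/

open SimpleGraph

section

variable {V W : Type*} {G' : SimpleGraph V} {G : SimpleGraph W}

namespace SimpleGraph.Walk

variable {f : V → W} {x' y' : V} {a b : W}

lemma apply_start_of_support_map_eq (w' : G'.Walk x' y') (w : G.Walk a b)
    (h : w'.support.map f = w.support) : f x' = a := by
  rw [← w'.cons_tail_support, ← w.cons_tail_support, List.map_cons] at h
  exact List.head_eq_of_cons_eq h

lemma apply_end_of_support_map_eq (w' : G'.Walk x' y') (w : G.Walk a b)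
    (h : w'.support.map f = w.support) : f y' = b := by
  simpa [List.getLast?_eq_some_getLast (support_ne_nil _)] using congrArg List.getLast? h

end SimpleGraph.Walk

lemma walkPow_succ_support {x : W} (w : G.Walk x x) (n : ℕ) :
    (walkPow w (n + 1)).support = (walkPow w n).support ++ w.support.tail :=
  Walk.support_append _ _

namespace IsGraphCovering

variable {p : G' →g G} (hp : IsGraphCovering p)
include hp

theorem exists_lift {a b : W} (w : G.Walk a b) {x' : V} (hx' : p x' = a) :
    ∃ (y' : V) (w' : G'.Walk x' y'), w'.support.map p = w.support := by
  induction w generalizing x' with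
  | nil => exact ⟨x', .nil, by simp [hx']⟩
  | @cons a c b hac _ ih =>
    subst hx'
    obtain ⟨u, hu, rfl⟩ := (hp x').surjOn (show c ∈ G.neighborSet (p x') from hac)
    obtain ⟨y', w', hw'⟩ := ih rfl
    exact ⟨y', .cons hu w', congrArg (p x' :: ·) hw'⟩

theorem end_eq_of_support_map_eq {x' y₁ y₂ : V} (w₁ : G'.Walk x' y₁) (w₂ : G'.Walk x' y₂)
    (h : w₁.support.map p = w₂.support.map p) : y₁ = y₂ := by
  induction w₁ with
  | nil => cases w₂ <;> simp_all
  | @cons a u₁ _ hu₁ q₁ ih =>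
    cases w₂ with
    | nil => simp_all
    | @cons _ u₂ _ hu₂ q₂ =>
      have htail : q₁.support.map p = q₂.support.map p := by simpa using h
      have hpu : p u₁ = p u₂ := by
        refine q₁.apply_start_of_support_map_eq (q₂.map p) ?_
        rw [htail, Walk.support_map]
      obtain rfl : u₁ = u₂ := (hp a).injOn hu₁ hu₂ hpu
      exact ih q₂ htail

theorem exists_injective_monodromy {x : W} (w : G.Walk x x) :
    ∃ f : {y : V // p y = x} → {y : V // p y = x}, Function.Injective f ∧
      ∀ a, ∃ w' : G'.Walk a.1 (f a).1, w'.support.map p = w.support := by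
  have hlift (a : {y : V // p y = x}) :
      ∃ b : {y : V // p y = x}, ∃ w' : G'.Walk a.1 b.1, w'.support.map p = w.support := by
    obtain ⟨y', w', hw'⟩ := hp.exists_lift w a.2
    exact ⟨⟨y', w'.apply_end_of_support_map_eq w hw'⟩, w', hw'⟩
  choose f hf using hlift
  refine ⟨f, fun a b hab => ?_, hf⟩
  obtain ⟨wa, hwa⟩ := hf a
  obtain ⟨wb, hwb⟩ := hf b
  have hend : (f a).1 = (f b).1 := congrArg Subtype.val hab
  refine Subtype.ext (hp.end_eq_of_support_map_eq (wa.reverse.copy hend rfl) wb.reverse ?_)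
  simp [Walk.support_reverse, List.map_reverse, hwa, hwb]

end IsGraphCovering

theorem exists_lift_walkPow {p : G' →g G} {x : W} (w : G.Walk x x)
    (f : {y : V // p y = x} → {y : V // p y = x})
    (hf : ∀ a, ∃ w' : G'.Walk a.1 (f a).1, w'.support.map p = w.support) (n : ℕ)
    (a : {y : V // p y = x}) :
    ∃ w' : G'.Walk a.1 (f^[n] a).1, w'.support.map p = (walkPow w n).support := by
  induction n with
  | zero => exact ⟨.nil, by simp [walkPow, a.2]⟩
  | succ n ih =>
    obtain ⟨w₁, hw₁⟩ := ih
    obtain ⟨w₂, hw₂⟩ := hf (f^[n] a)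
    rw [Function.iterate_succ_apply']
    refine ⟨w₁.append w₂, ?_⟩
    rw [walkPow_succ_support, Walk.support_append, List.map_append, List.map_tail, hw₁, hw₂]

end

/-- Every closed walk in the base of a graph covering with finite
(nonempty) fiber has a multiple that lifts to a closed walk: if `p : G' → G` is a covering,
`x` a vertex of `G` with finite fiber, `w` a closed walk based at `x`, and `x'` a point of
the fiber over `x`, then some `N`-fold concatenation of `w` (with `N ≥ 1`) lifts to a
closed walk in `G'` based at `x'`. -/
theorem stmt10 {V W : Type*} {G' : SimpleGraph V} {G : SimpleGraph W}
    (p : G' →g G) (hp : IsGraphCovering p) (x : W)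
    (hfin : {y : V | p y = x}.Finite)
    (w : G.Walk x x) (x' : V) (hx' : p x' = x) :
    ∃ N : ℕ, 1 ≤ N ∧ ∃ w' : G'.Walk x' x',
      w'.map p = (walkPow w N).copy hx'.symm hx'.symm := by
  have : Finite {y : V // p y = x} := hfin.to_subtype
  obtain ⟨f, hinj, hf⟩ := hp.exists_injective_monodromy w
  obtain ⟨N, hN, hfix⟩ := hinj.mem_periodicPts ⟨x', hx'⟩
  obtain ⟨w', hw'⟩ := exists_lift_walkPow w f hf N ⟨x', hx'⟩
  subst hx'
  refine ⟨N, hN, w'.copy rfl (congrArg Subtype.val hfix.eq), Walk.ext_support ?_⟩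
  simpa [Walk.support_map] using hw'
end
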